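/- Define H_cns = closure[ span{ (A − μ)^{-1}x : Im μ < 0, x ∈ M } + span{ (A* − λ)^{-1}x : Im λ > 0, x ∈ M } ], where M = Ran((Γ(A + i)^{-1})*) ∪ Ran((Γ_*(A* − i)^{-1})*) ⊆ H, and let H_sa = H ⊖ H_cns be its orthogonal complement. Then: (i) H_cns is a reducing subspace for A, i.e. both H_cns and H_sa are invariant for A (a closed subspace K is invariant for A if the orthogonal projection P_K satisfies P_K D(A) ⊆ D(A) and A P_K h ∈ K for all h ∈ D(A)); (ii) the restriction A_sa of A to H_sa, with domain P_{H_sa}D(A), is a selfadjoint operator in the Hilbert space H_sa; (iii) the restriction A_cns of A to H_cns, with domain P_{H_cns}D(A), is completely non-selfadjoint in H_cns, i.e. there is no nonzero closed subspace W ⊆ H_cns which is reducing for A_cns and such that the restriction of A_cns to W is selfadjoint in W. -/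

import Mathlib

open scoped ComplexInnerProductSpace

noncomputable section

/-- A maximal dissipative operator on a complex Hilbert space `H`, together with the
(derivable) data of its resolvent on the open lower half-plane and the resolvent of its
adjoint on the open upper half-plane.  Here the inner product `⟪·,·⟫` is conjugate-linear
in the first variable, so that the paper's `⟨x, y⟩` corresponds to `⟪y, x⟫`. -/
structure MDO (H : Type*) [NormedAddCommGroup H] [InnerProductSpace ℂ H]
    [CompleteSpace H] where
  /-- The underlying densely defined operator. -/
  A : H →ₗ.[ℂ] H
  dense_dom : Dense (A.domain : Set H)
  dissipative : ∀ u : A.domain, 0 ≤ (⟪(u : H), A u⟫).im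
  /-- `R z` is the bounded inverse `(A - z)⁻¹`, for `Im z < 0`. -/
  R : ℂ → H →L[ℂ] H
  R_mem : ∀ z, z.im < 0 → ∀ h : H, R z h ∈ A.domain
  R_right : ∀ z (hz : z.im < 0) (h : H), A ⟨R z h, R_mem z hz h⟩ - z • R z h = h
  R_left : ∀ z, z.im < 0 → ∀ u : A.domain, R z (A u - z • (u : H)) = (u : H)
  dense_dom_star : Dense (A.adjoint.domain : Set H)
  anti_dissipative_star : ∀ u : A.adjoint.domain, (⟪(u : H), A.adjoint u⟫).im ≤ 0
  /-- `Rs z` is the bounded inverse `(A* - z)⁻¹`, for `Im z > 0`. -/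
  Rs : ℂ → H →L[ℂ] H
  Rs_mem : ∀ z, 0 < z.im → ∀ h : H, Rs z h ∈ A.adjoint.domain
  Rs_right : ∀ z (hz : 0 < z.im) (h : H),
    A.adjoint ⟨Rs z h, Rs_mem z hz h⟩ - z • Rs z h = h
  Rs_left : ∀ z, 0 < z.im → ∀ u : A.adjoint.domain,
    Rs z (A.adjoint u - z • (u : H)) = (u : H)

/-- A maximal dissipative operator together with boundary operators `Γ`, `Γ_*` satisfying
the abstract Lagrange identities, and the bounded compositions `ΓR z = Γ ∘ (A - z)⁻¹`
(for `Im z < 0`) and `ΓsRs z = Γ_* ∘ (A* - z)⁻¹` (for `Im z > 0`). -/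
structure StrausSetting (H E Es : Type*)
    [NormedAddCommGroup H] [InnerProductSpace ℂ H] [CompleteSpace H]
    [NormedAddCommGroup E] [InnerProductSpace ℂ E] [CompleteSpace E]
    [NormedAddCommGroup Es] [InnerProductSpace ℂ Es] [CompleteSpace Es]
    extends MDO H where
  Γ : A.domain →ₗ[ℂ] E
  Γ_bdd : ∃ C : ℝ, ∀ u : A.domain, ‖Γ u‖ ≤ C * (‖(u : H)‖ + ‖A u‖)
  Γ_dense : DenseRange Γ
  lagrange : ∀ u v : A.domain,
    ⟪(v : H), A u⟫ - ⟪A v, (u : H)⟫ = Complex.I * ⟪Γ v, Γ u⟫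
  Γs : A.adjoint.domain →ₗ[ℂ] Es
  Γs_bdd : ∃ C : ℝ, ∀ u : A.adjoint.domain,
    ‖Γs u‖ ≤ C * (‖(u : H)‖ + ‖A.adjoint u‖)
  Γs_dense : DenseRange Γs
  lagrange_star : ∀ u v : A.adjoint.domain,
    ⟪(v : H), A.adjoint u⟫ - ⟪A.adjoint v, (u : H)⟫ = -Complex.I * ⟪Γs v, Γs u⟫
  /-- `ΓR z = Γ ∘ (A - z)⁻¹` as a bounded operator `H →L[ℂ] E`, for `Im z < 0`. -/
  ΓR : ℂ → H →L[ℂ] E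
  ΓR_spec : ∀ z (hz : z.im < 0) (h : H), ΓR z h = Γ ⟨R z h, R_mem z hz h⟩
  /-- `ΓsRs z = Γ_* ∘ (A* - z)⁻¹` as a bounded operator `H →L[ℂ] Es`, for `Im z > 0`. -/
  ΓsRs : ℂ → H →L[ℂ] Es
  ΓsRs_spec : ∀ z (hz : 0 < z.im) (h : H), ΓsRs z h = Γs ⟨Rs z h, Rs_mem z hz h⟩

variable {H E Es : Type*}
    [NormedAddCommGroup H] [InnerProductSpace ℂ H] [CompleteSpace H]
    [NormedAddCommGroup E] [InnerProductSpace ℂ E] [CompleteSpace E]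
    [NormedAddCommGroup Es] [InnerProductSpace ℂ Es] [CompleteSpace Es]

/-- The set `M = Ran((Γ(A + i)⁻¹)*) ∪ Ran((Γ_*(A* - i)⁻¹)*) ⊆ H`. -/
def StrausSetting.MSet (M : StrausSetting H E Es) (l1 l2 : ℂ) : Set H :=
  Set.range (ContinuousLinearMap.adjoint (M.ΓR (-l1)))
    ∪ Set.range (ContinuousLinearMap.adjoint (M.ΓsRs l2))

/-- `H_cns`, the closure of
`span{(A - μ)⁻¹ x : Im μ < 0, x ∈ M} + span{(A* - λ)⁻¹ x : Im λ > 0, x ∈ M}`. -/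
noncomputable def StrausSetting.cnsSubspace (M : StrausSetting H E Es) (l1 l2 : ℂ) :
    Submodule ℂ H :=
  (Submodule.span ℂ
    ({y | ∃ (mu : ℂ) (x : H), mu.im < 0 ∧ x ∈ M.MSet l1 l2 ∧ y = M.R mu x}
      ∪ {y | ∃ (lam : ℂ) (x : H), 0 < lam.im ∧ x ∈ M.MSet l1 l2 ∧
          y = M.Rs lam x})).topologicalClosure

/-- `P` is the orthogonal projection of `H` onto the subspace `K`. -/
structure IsOrthProjOn (K : Submodule ℂ H) (P : H →L[ℂ] H) : Prop where
  mem : ∀ x : H, P x ∈ K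
  id_of_mem : ∀ x ∈ K, P x = x
  sub_mem_orth : ∀ x : H, x - P x ∈ Kᗮ

/-- `K` is an invariant subspace for the partially defined operator `T`:
`P_K D(T) ⊆ D(T)` and `T P_K h ∈ K` for all `h ∈ D(T)`, where `P_K` is the orthogonal
projection onto `K`. -/
def PMapInvariant (T : H →ₗ.[ℂ] H) (K : Submodule ℂ H) : Prop :=
  ∃ P : H →L[ℂ] H, IsOrthProjOn K P ∧
    ∀ u : T.domain, ∃ h : P (u : H) ∈ T.domain, T ⟨P (u : H), h⟩ ∈ K

/-- `W` is invariant for the restriction of `T` to the (reducing) subspace `K`: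
for the orthogonal projection `P_W` onto `W`, `P_W` maps `D(T) ∩ K` into `D(T)`, and
`T P_W u ∈ W` for `u ∈ D(T) ∩ K`. -/
def RelInvariant (T : H →ₗ.[ℂ] H) (K W : Submodule ℂ H) : Prop :=
  ∃ P : H →L[ℂ] H, IsOrthProjOn W P ∧
    ∀ u : T.domain, (u : H) ∈ K →
      ∃ h : P (u : H) ∈ T.domain, T ⟨P (u : H), h⟩ ∈ W

/-- The restriction of `T` to the subspace `K` (with domain `D(T) ∩ K`) is a selfadjoint
operator in the Hilbert space `K`: it is densely defined in `K`, maps into `K`, is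
symmetric, and both `B ± i` are surjective onto `K` (the standard criterion for
selfadjointness of a symmetric operator). -/
def IsSelfAdjointOn (T : H →ₗ.[ℂ] H) (K : Submodule ℂ H) : Prop :=
  ((K : Set H) ⊆ closure ((K : Set H) ∩ (T.domain : Set H))) ∧
  (∀ u : T.domain, (u : H) ∈ K → T u ∈ K) ∧
  (∀ u v : T.domain, (u : H) ∈ K → (v : H) ∈ K →
    ⟪(v : H), T u⟫ = ⟪T v, (u : H)⟫) ∧
  (∀ f ∈ K, ∃ u : T.domain, (u : H) ∈ K ∧ T u - Complex.I • (u : H) = f) ∧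
  (∀ f ∈ K, ∃ u : T.domain, (u : H) ∈ K ∧ T u + Complex.I • (u : H) = f)

/-! The resolvent identity and the bound `‖(A - z)⁻¹‖ ≤ |Im z|⁻¹` show, through Neumann series
and the connectedness of the half-plane, that a closed subspace invariant under one resolvent
`(A - z₀)⁻¹` is invariant under all of them, and likewise for `A*`.

Testing against resolvents, the Lagrange identities give the defect formulas
`v = (A - μ)⁻¹ (A* - μ) v + i (Γ_* (A* - μ̄)⁻¹)* Γ_* v` on `D(A*)` and its dual on `D(A)`. With
them, and since `M ⊆ H_cns` (`x = lim it (A + it)⁻¹ x`), `H_cns` is invariant under `(A + i)⁻¹`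
and `(A* - i)⁻¹ = ((A + i)⁻¹)*`, hence so is `H_sa`, and both reduce `A`. On `H_sa` the maps
`Γ (A + i)⁻¹` and `Γ_* (A* - i)⁻¹` vanish (their adjoints range in `H_cns`), so `A` is symmetric
there and `A ± i` are onto. Conversely these maps vanish on a selfadjoint part `W ⊆ H_cns`,
which is then invariant under all resolvents and orthogonal to `M`, hence to `H_cns`, so
`W = 0`. -/

open Complex Filter Topology
open scoped InnerProduct ComplexConjugate

variable {V : Type*} [NormedAddCommGroup V] [InnerProductSpace ℂ V]

section Orthogonality

lemma exists_isOrthProjOn [CompleteSpace V] {K : Submodule ℂ V} (hK : IsClosed (K : Set V)) :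
    ∃ P : V →L[ℂ] V, IsOrthProjOn K P := by
  have : CompleteSpace K := hK.completeSpace_coe
  exact ⟨K.starProjection, K.starProjection_apply_mem, fun x hx =>
    K.starProjection_eq_self_iff.mpr hx, K.sub_starProjection_mem_orthogonal⟩

lemma orthogonal_orthogonal_of_isClosed [CompleteSpace V] {K : Submodule ℂ V}
    (hK : IsClosed (K : Set V)) : Kᗮᗮ = K := by
  rw [Submodule.orthogonal_orthogonal_eq_closure, hK.submodule_topologicalClosure_eq]

namespace IsOrthProjOn

variable {K : Submodule ℂ V} {P : V →L[ℂ] V}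

lemma apply_eq_zero (hP : IsOrthProjOn K P) {x : V} (hx : x ∈ Kᗮ) : P x = 0 := by
  have h : P x ∈ Kᗮ := by simpa using Kᗮ.sub_mem hx (hP.sub_mem_orth x)
  exact inner_self_eq_zero.mp (Submodule.inner_right_of_mem_orthogonal (hP.mem x) h)

lemma apply_comm (hP : IsOrthProjOn K P) {T : V →L[ℂ] V} (hK : Set.MapsTo T K K)
    (hKo : Set.MapsTo T Kᗮ Kᗮ) (x : V) : P (T x) = T (P x) := by
  have hx : T x = T (P x) + T (x - P x) := by rw [← map_add, add_sub_cancel]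
  rw [hx, map_add, hP.id_of_mem _ (hK (hP.mem x)), hP.apply_eq_zero (hKo (hP.sub_mem_orth x)),
    add_zero]

end IsOrthProjOn

lemma mapsTo_orthogonal_of_mapsTo_adjoint [CompleteSpace V] {T : V →L[ℂ] V} {K : Submodule ℂ V}
    (h : Set.MapsTo (T†) K K) : Set.MapsTo T Kᗮ Kᗮ :=
  (Module.End.mem_invtSubmodule_iff_mapsTo _).1 <|
    ContinuousLinearMap.orthogonal_mem_invtSubmodule <|
      (Module.End.mem_invtSubmodule_iff_mapsTo _).2 h

lemma range_adjoint_subset_orthogonal_iff [CompleteSpace V] {F : V →L[ℂ] E} {L : Submodule ℂ V} :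
    Set.range (F†) ⊆ Lᗮ ↔ ∀ w ∈ L, F w = 0 := by
  constructor
  · intro h w hw
    rw [← inner_self_eq_zero (𝕜 := ℂ), ← ContinuousLinearMap.adjoint_inner_right]
    exact Submodule.inner_right_of_mem_orthogonal hw (h ⟨_, rfl⟩)
  · rintro h _ ⟨e, rfl⟩
    rw [SetLike.mem_coe, Submodule.mem_orthogonal]
    intro w hw
    rw [ContinuousLinearMap.adjoint_inner_right, h w hw, inner_zero_left]

end Orthogonality

section PMapInvariant

variable {T : V →ₗ.[ℂ] V} {K : Submodule ℂ V}

lemma PMapInvariant.apply_mem (hK : PMapInvariant T K) {u : T.domain} (hu : (u : V) ∈ K) :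
    T u ∈ K := by
  obtain ⟨P, hP, hT⟩ := hK
  obtain ⟨hPu, hmem⟩ := hT u
  rwa [show (⟨P u, hPu⟩ : T.domain) = u from Subtype.ext (hP.id_of_mem _ hu)] at hmem

lemma PMapInvariant.subset_closure_inter_domain (hK : PMapInvariant T K)
    (hT : Dense (T.domain : Set V)) : (K : Set V) ⊆ closure ((K : Set V) ∩ T.domain) := by
  obtain ⟨P, hP, hPT⟩ := hK
  have hP_image : P '' T.domain ⊆ (K : Set V) ∩ T.domain := by
    rintro _ ⟨u, hu, rfl⟩
    exact ⟨hP.mem u, (hPT ⟨u, hu⟩).1⟩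
  intro x hx
  rw [← hP.id_of_mem x hx]
  exact closure_mono hP_image
    (image_closure_subset_closure_image P.continuous ⟨x, hT.closure_eq ▸ trivial, rfl⟩)

lemma pmapInvariant_of_resolvent [CompleteSpace V] {z : ℂ} {Rz : V →L[ℂ] V}
    (mem : ∀ h, Rz h ∈ T.domain) (right : ∀ h, T ⟨Rz h, mem h⟩ - z • Rz h = h)
    (left : ∀ u : T.domain, Rz (T u - z • u) = u) (hK : IsClosed (K : Set V))
    (hRK : Set.MapsTo Rz K K) (hRKo : Set.MapsTo Rz Kᗮ Kᗮ) :
    PMapInvariant T K := by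
  obtain ⟨P, hP⟩ := exists_isOrthProjOn hK
  refine ⟨P, hP, fun u => ?_⟩
  have hPu : P u = Rz (P (T u - z • u)) := by rw [← hP.apply_comm hRK hRKo, left]
  rw [hPu]
  refine ⟨mem _, ?_⟩
  rw [← sub_add_cancel (T _) (z • Rz _), right]
  exact K.add_mem (hP.mem _) (K.smul_mem z (hRK (hP.mem _)))

end PMapInvariant

section Neumann

variable [CompleteSpace V] {W : Submodule ℂ V}

lemma mapsTo_tsum_pow (hW : IsClosed (W : Set V)) {x : V →L[ℂ] V} (hx : ‖x‖ < 1)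
    (hxW : Set.MapsTo x W W) : Set.MapsTo (⇑(∑' n, x ^ n)) W W := by
  have hpow : ∀ n, Set.MapsTo (⇑(x ^ n)) W W := fun n => by
    rw [FunLike.coe_pow_eq_iterate]; exact hxW.iterate n
  intro w hw
  refine hW.mem_of_tendsto
    (((summable_geometric_of_norm_lt_one hx).hasSum).mapL (ContinuousLinearMap.apply ℂ V w))
    (Eventually.of_forall fun s => W.sum_mem fun n _ => hpow n hw)

/-- `S = T (1 - c T)⁻¹`, and the inverse is a Neumann series in `c T`. -/
lemma mapsTo_of_eq_add_smul_mul (hW : IsClosed (W : Set V)) {T S : V →L[ℂ] V} {c : ℂ}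
    (hST : S = T + c • (S * T)) (hc : ‖c • T‖ < 1) (hT : Set.MapsTo T W W) :
    Set.MapsTo S W W := by
  have hS : S = T * ∑' n, (c • T) ^ n := by
    calc S = S * ((1 - c • T) * ∑' n, (c • T) ^ n) := by rw [mul_neg_geom_series _ hc, mul_one]
      _ = T * ∑' n, (c • T) ^ n := by
        rw [← mul_assoc, mul_sub, mul_one, mul_smul_comm, sub_eq_of_eq_add hST]
  rw [hS]
  exact hT.comp (mapsTo_tsum_pow hW hc fun w hw => W.smul_mem c (hT hw))

end Neumann

lemma tendsto_of_dense_of_norm_le {ι : Type*} {l : Filter ι} {F : ι → V →L[ℂ] V} {C : ℝ}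
    (hF : ∀ i, ‖F i‖ ≤ C) {D : Set V} (hD : Dense D)
    (hDF : ∀ x ∈ D, Tendsto (fun i => F i x) l (𝓝 x)) (x : V) :
    Tendsto (fun i => F i x) l (𝓝 x) := by
  have hequi : Equicontinuous ((↑) ∘ F : ι → V → V) :=
    (show (∃ C, ∀ i, ‖F i‖ ≤ C) ↔ _ from (NormedSpace.equicontinuous_TFAE F).out 5 1).1 ⟨C, hF⟩
  exact closure_minimal hDF (hequi.isClosed_setOfPred_tendsto continuous_id) (hD x)

section DissipativeResolvent

/-- The abstract properties of the resolvent `z ↦ (B - z)⁻¹`, `Im z < 0`, of a maximal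
dissipative operator `B`. -/
structure IsDissipativeResolvent (T : ℂ → V →L[ℂ] V) : Prop where
  resolvent_eq : ∀ z w, z.im < 0 → w.im < 0 → T z = T w + (z - w) • (T z * T w)
  norm_le : ∀ z, z.im < 0 → ‖T z‖ ≤ (-z.im)⁻¹

lemma LinearPMap.mul_norm_le_norm_sub_smul {B : V →ₗ.[ℂ] V}
    (hB : ∀ u : B.domain, 0 ≤ (⟪(u : V), B u⟫).im) (z : ℂ) (u : B.domain) :
    -z.im * ‖(u : V)‖ ≤ ‖B u - z • (u : V)‖ := by
  have h : -z.im * ‖(u : V)‖ ^ 2 ≤ ‖(u : V)‖ * ‖B u - z • (u : V)‖ :=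
    calc -z.im * ‖(u : V)‖ ^ 2 ≤ (⟪(u : V), B u - z • (u : V)⟫).im := by
          have hz : (⟪(u : V), z • (u : V)⟫).im = z.im * ‖(u : V)‖ ^ 2 := by
            simp [inner_self_eq_norm_sq_to_K, ← ofReal_pow]
          rw [inner_sub_right, sub_im, hz]; linarith [hB u]
      _ ≤ ‖⟪(u : V), B u - z • (u : V)⟫‖ := im_le_norm _
      _ ≤ ‖(u : V)‖ * ‖B u - z • (u : V)‖ := norm_inner_le_norm _ _
  rcases (norm_nonneg (u : V)).eq_or_lt with hu | hu
  · rw [← hu, mul_zero]; positivity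
  · nlinarith

lemma isDissipativeResolvent_of_dissipative {B : V →ₗ.[ℂ] V}
    (hB : ∀ u : B.domain, 0 ≤ (⟪(u : V), B u⟫).im) {T : ℂ → V →L[ℂ] V}
    (mem : ∀ z, z.im < 0 → ∀ h, T z h ∈ B.domain)
    (right : ∀ z (hz : z.im < 0) h, B ⟨T z h, mem z hz h⟩ - z • T z h = h)
    (left : ∀ z, z.im < 0 → ∀ u : B.domain, T z (B u - z • (u : V)) = u) :
    IsDissipativeResolvent T where
  resolvent_eq z w hz hw := by
    ext h
    set u : B.domain := ⟨T w h, mem w hw h⟩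
    have hh : (B u - z • (u : V)) + (z - w) • (u : V) = h := by
      linear_combination (norm := module) right w hw h
    calc T z h = T z ((B u - z • (u : V)) + (z - w) • (u : V)) := by rw [hh]
      _ = T w h + (z - w) • T z (T w h) := by rw [map_add, map_smul, left z hz]
  norm_le z hz := by
    refine ContinuousLinearMap.opNorm_le_bound _ (inv_nonneg.2 (by linarith)) fun h => ?_
    have := LinearPMap.mul_norm_le_norm_sub_smul hB z ⟨T z h, mem z hz h⟩
    rw [right z hz h] at this
    rw [inv_mul_eq_div, le_div_iff₀ (by linarith)]
    linarith

end DissipativeResolvent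

namespace IsDissipativeResolvent

variable {T : ℂ → V →L[ℂ] V}

lemma continuousAt (hT : IsDissipativeResolvent T) {z : ℂ} (hz : z.im < 0) :
    ContinuousAt T z := by
  have hnear : ∀ᶠ w in 𝓝 z, ‖T w - T z‖ ≤ ‖w - z‖ * ((-w.im)⁻¹ * (-z.im)⁻¹) := by
    filter_upwards [(isOpen_lt continuous_im continuous_const).mem_nhds hz] with w hw
    rw [hT.resolvent_eq w z hw hz, add_sub_cancel_left, norm_smul]
    gcongr
    exact (ContinuousLinearMap.opNorm_comp_le _ _).trans
      (mul_le_mul (hT.norm_le w hw) (hT.norm_le z hz) (norm_nonneg _)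
        (inv_nonneg.2 (by linarith)))
  have hbound : Tendsto (fun w : ℂ => ‖w - z‖ * ((-w.im)⁻¹ * (-z.im)⁻¹)) (𝓝 z) (𝓝 0) := by
    have hcont : ContinuousAt (fun w : ℂ => ‖w - z‖ * ((-w.im)⁻¹ * (-z.im)⁻¹)) z :=
      (continuous_id.sub continuous_const).norm.continuousAt.mul
        (((continuous_im.neg).continuousAt.inv₀ (neg_ne_zero.2 hz.ne)).mul continuousAt_const)
    simpa using hcont.tendsto
  exact tendsto_iff_norm_sub_tendsto_zero.2
    (squeeze_zero' (Eventually.of_forall fun _ => norm_nonneg _) hnear hbound)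

lemma mapsTo [CompleteSpace V] (hT : IsDissipativeResolvent T) {W : Submodule ℂ V}
    (hW : IsClosed (W : Set V)) {z₀ : ℂ} (hz₀ : z₀.im < 0) (h₀ : Set.MapsTo (T z₀) W W)
    {z : ℂ} (hz : z.im < 0) : Set.MapsTo (T z) W W := by
  set U := {z : ℂ | z.im < 0 ∧ Set.MapsTo (T z) W W}
  have step {z₁ z₂ : ℂ} (h₁ : z₁ ∈ U) (hd : dist z₂ z₁ < -z₁.im) : z₂ ∈ U := by
    have him := abs_im_le_norm (z₂ - z₁)
    rw [sub_im, ← dist_eq_norm] at him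
    have hz₂ : z₂.im < 0 := by linarith [le_abs_self (z₂.im - z₁.im)]
    refine ⟨hz₂, mapsTo_of_eq_add_smul_mul hW (hT.resolvent_eq z₂ z₁ hz₂ h₁.1) ?_ h₁.2⟩
    calc ‖(z₂ - z₁) • T z₁‖ ≤ ‖z₂ - z₁‖ * (-z₁.im)⁻¹ := by
          rw [norm_smul]; gcongr; exact hT.norm_le z₁ h₁.1
      _ < 1 := by
          rw [← dist_eq_norm, ← div_eq_mul_inv, div_lt_one (by linarith [h₁.1])]; exact hd
  have hU_open : IsOpen U :=
    Metric.isOpen_iff.2 fun z₁ h₁ => ⟨-z₁.im, by linarith [h₁.1], fun _ hd => step h₁ hd⟩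
  have hU_closed : closure U ∩ {z | z.im < 0} ⊆ U := by
    rintro z ⟨hzU, hz : z.im < 0⟩
    obtain ⟨z₁, h₁, hd⟩ := Metric.mem_closure_iff.1 hzU (-z.im / 2) (by linarith)
    have him := abs_im_le_norm (z - z₁)
    rw [sub_im, ← dist_eq_norm] at him
    exact step h₁ (by linarith [neg_abs_le (z.im - z₁.im), dist_comm z z₁])
  -- `U` is open and relatively closed in the connected half-plane.
  exact ((convex_halfSpace_im_lt 0).isPreconnected.subset_of_closure_inter_subset hU_open
    ⟨z₀, hz₀, hz₀, h₀⟩ hU_closed hz).2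

lemma apply_apply_mem (hT : IsDissipativeResolvent T) {K : Submodule ℂ V}
    (hK : IsClosed (K : Set V)) {x : V} (hx : ∀ μ, μ.im < 0 → T μ x ∈ K) {z μ : ℂ}
    (hz : z.im < 0) (hμ : μ.im < 0) : T z (T μ x) ∈ K := by
  have off_diag {w : ℂ} (hw : w.im < 0) (hwz : w ≠ z) : T z (T w x) ∈ K := by
    have h : T z x = T w x + (z - w) • T z (T w x) :=
      congrArg (· x) (hT.resolvent_eq z w hz hw)
    rw [← K.smul_mem_iff (sub_ne_zero.2 hwz.symm), eq_sub_of_add_eq' h.symm]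
    exact K.sub_mem (hx z hz) (hx w hw)
  rcases eq_or_ne μ z with rfl | hμz
  · -- `T μ (T μ x)` is a limit of off-diagonal terms, by continuity of `T` at `μ`
    have hlim : Tendsto (fun w => T μ (T w x)) (𝓝[≠] μ) (𝓝 (T μ (T μ x))) :=
      ((T μ).continuous.tendsto _).comp
        (((hT.continuousAt hz).clm_apply continuousAt_const).mono_left nhdsWithin_le_nhds)
    refine hK.mem_of_tendsto hlim ?_
    filter_upwards [self_mem_nhdsWithin,
      nhdsWithin_le_nhds ((isOpen_lt continuous_im continuous_const).mem_nhds hz)] with w hwz hw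
    exact off_diag hw hwz
  · exact off_diag hμ hμz

end IsDissipativeResolvent

namespace MDO

variable (M : MDO H)

lemma isDissipativeResolvent_R : IsDissipativeResolvent M.R :=
  isDissipativeResolvent_of_dissipative M.dissipative M.R_mem M.R_right M.R_left

/-- `z ↦ -(A* + z)⁻¹` is the resolvent of the maximal dissipative operator `-A*`. -/
lemma isDissipativeResolvent_neg_Rs : IsDissipativeResolvent fun z => -M.Rs (-z) := by
  refine isDissipativeResolvent_of_dissipative (B := -M.A.adjoint)
    (fun u => by simpa using M.anti_dissipative_star u)
    (fun z hz h => M.A.adjoint.domain.neg_mem (M.Rs_mem (-z) (by simpa using hz) h))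
    (fun z hz h => ?_) (fun z hz u => ?_)
  · have hz' : 0 < (-z).im := by simpa using hz
    have e : M.A.adjoint ⟨-M.Rs (-z) h, M.A.adjoint.domain.neg_mem (M.Rs_mem (-z) hz' h)⟩
        = -M.A.adjoint ⟨M.Rs (-z) h, M.Rs_mem (-z) hz' h⟩ :=
      M.A.adjoint.toFun.map_neg ⟨M.Rs (-z) h, M.Rs_mem (-z) hz' h⟩
    simp only [neg_apply, LinearPMap.neg_apply]
    rw [e]
    linear_combination (norm := module) M.Rs_right (-z) hz' h
  · have hz' : 0 < (-z).im := by simpa using hz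
    have e : -(-M.A.adjoint u - z • (u : H)) = M.A.adjoint u - (-z) • (u : H) := by module
    simp only [neg_apply, LinearPMap.neg_apply]
    rw [← map_neg, e]
    exact M.Rs_left (-z) hz' u

lemma inner_R_apply {z : ℂ} (hz : z.im < 0) (x y : H) :
    ⟪M.R z x, y⟫ = ⟪x, M.Rs (conj z) y⟫ := by
  have hz' : 0 < (conj z).im := by simpa using hz
  have hform := (LinearPMap.adjoint_isFormalAdjoint M.dense_dom).symm
    ⟨M.R z x, M.R_mem z hz x⟩ ⟨M.Rs (conj z) y, M.Rs_mem _ hz' y⟩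
  calc ⟪M.R z x, y⟫ = ⟪M.R z x, M.A.adjoint ⟨_, M.Rs_mem _ hz' y⟩ - conj z • M.Rs (conj z) y⟫ := by
        rw [M.Rs_right _ hz' y]
    _ = ⟪M.A ⟨_, M.R_mem z hz x⟩ - z • M.R z x, M.Rs (conj z) y⟫ := by
        rw [inner_sub_right, inner_sub_left, inner_smul_right, inner_smul_left]
        linear_combination -hform
    _ = ⟪x, M.Rs (conj z) y⟫ := by rw [M.R_right z hz x]

lemma adjoint_Rs {z : ℂ} (hz : 0 < z.im) : (M.Rs z)† = M.R (conj z) := by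
  refine ((ContinuousLinearMap.eq_adjoint_iff _ _).2 fun x y => ?_).symm
  simpa using M.inner_R_apply (z := conj z) (by simpa using hz) x y

lemma adjoint_R {z : ℂ} (hz : z.im < 0) : (M.R z)† = M.Rs (conj z) := by
  rw [← ContinuousLinearMap.adjoint_adjoint (M.Rs (conj z)), M.adjoint_Rs (by simpa using hz),
    conj_conj]

lemma adjoint_R_neg_I : (M.R (-I))† = M.Rs I := by
  rw [M.adjoint_R (by simp), map_neg, conj_I, neg_neg]

lemma adjoint_Rs_I : (M.Rs I)† = M.R (-I) := by
  rw [M.adjoint_Rs (by simp), conj_I]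

lemma Rs_apply_Rs_mem {K : Submodule ℂ H} (hK : IsClosed (K : Set H)) {x : H}
    (hx : ∀ w, 0 < w.im → M.Rs w x ∈ K) {z w : ℂ} (hz : 0 < z.im) (hw : 0 < w.im) :
    M.Rs z (M.Rs w x) ∈ K := by
  simpa using M.isDissipativeResolvent_neg_Rs.apply_apply_mem hK
    (fun μ hμ => K.neg_mem (hx (-μ) (by simpa using hμ))) (z := -z) (μ := -w)
    (by simpa using hz) (by simpa using hw)

lemma mapsTo_Rs {W : Submodule ℂ H} (hW : IsClosed (W : Set H)) {z₀ : ℂ} (hz₀ : 0 < z₀.im)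
    (h₀ : Set.MapsTo (M.Rs z₀) W W) {z : ℂ} (hz : 0 < z.im) : Set.MapsTo (M.Rs z) W W := by
  have := M.isDissipativeResolvent_neg_Rs.mapsTo hW (z₀ := -z₀) (by simpa using hz₀)
    (fun w hw => by simpa using W.neg_mem (h₀ hw)) (z := -z) (by simpa using hz)
  exact fun w hw => by simpa using W.neg_mem (this hw)

lemma inner_Rs_apply {z : ℂ} (hz : 0 < z.im) (x y : H) :
    ⟪M.Rs z x, y⟫ = ⟪x, M.R (conj z) y⟫ := by
  rw [← M.adjoint_Rs hz, ContinuousLinearMap.adjoint_inner_right]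

lemma exists_apply_eq_of_eq_R {z : ℂ} (hz : z.im < 0) {x y : H} (h : x = M.R z y) :
    ∃ hx : x ∈ M.A.domain, M.A ⟨x, hx⟩ = y + z • x := by
  subst h
  exact ⟨M.R_mem z hz y, eq_add_of_sub_eq (M.R_right z hz y)⟩

lemma pmapInvariant_of_mapsTo {K : Submodule ℂ H} (hK : IsClosed (K : Set H))
    (hR : Set.MapsTo (M.R (-I)) K K) (hRs : Set.MapsTo (M.Rs I) K K) : PMapInvariant M.A K :=
  pmapInvariant_of_resolvent (M.R_mem (-I) (by simp)) (M.R_right (-I) (by simp))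
    (M.R_left (-I) (by simp)) hK hR
    (mapsTo_orthogonal_of_mapsTo_adjoint (by rwa [M.adjoint_R_neg_I]))

lemma tendsto_smul_R (x : H) :
    Tendsto (fun n : ℕ => ((n : ℂ) * I) • M.R (-((n : ℂ) * I)) x) atTop (𝓝 x) := by
  have hnorm {n : ℕ} (hn : 0 < n) : ‖M.R (-((n : ℂ) * I))‖ ≤ (n : ℝ)⁻¹ := by
    simpa using M.isDissipativeResolvent_R.norm_le (-((n : ℂ) * I)) (by simpa using hn)
  set F : ℕ → H →L[ℂ] H := fun n => ((n : ℂ) * I) • M.R (-((n : ℂ) * I))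
  have hF : ∀ n, ‖F n‖ ≤ 1 := by
    intro n
    rcases Nat.eq_zero_or_pos n with rfl | hn
    · simp [F]
    · calc ‖F n‖ ≤ n * (n : ℝ)⁻¹ := by
            rw [norm_smul, norm_mul, norm_I, mul_one, norm_natCast]
            gcongr
            exact hnorm hn
        _ = 1 := mul_inv_cancel₀ (by positivity)
  refine tendsto_of_dense_of_norm_le hF M.dense_dom (fun u hu => ?_) x
  -- on `D(A)`, `n i (A + n i)⁻¹ u = u - (A + n i)⁻¹ A u`
  have hR : Tendsto (fun n : ℕ => M.R (-((n : ℂ) * I)) (M.A ⟨u, hu⟩)) atTop (𝓝 0) := by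
    refine squeeze_zero_norm' ?_ (by simpa using (tendsto_inv_atTop_zero.comp
      tendsto_natCast_atTop_atTop).mul_const ‖M.A ⟨u, hu⟩‖)
    filter_upwards [eventually_gt_atTop 0] with n hn
    exact (ContinuousLinearMap.le_opNorm _ _).trans (by gcongr; exact hnorm hn)
  have hlim := (tendsto_const_nhds (x := u)).sub hR
  rw [sub_zero] at hlim
  refine hlim.congr' ?_
  filter_upwards [eventually_gt_atTop 0] with n hn
  have h := M.R_left (-((n : ℂ) * I)) (by simpa using hn) ⟨u, hu⟩
  rw [map_sub, map_smul] at h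
  simp only [F, smul_apply]
  linear_combination (norm := module) -h

end MDO

namespace StrausSetting

variable (M : StrausSetting H E Es)

lemma Γ_eq_ΓR {z : ℂ} (hz : z.im < 0) (u : M.A.domain) :
    M.Γ u = M.ΓR z (M.A u - z • (u : H)) := by
  rw [M.ΓR_spec z hz]
  exact congrArg M.Γ (Subtype.ext (M.R_left z hz u).symm)

lemma Γs_eq_ΓsRs {z : ℂ} (hz : 0 < z.im) (v : M.A.adjoint.domain) :
    M.Γs v = M.ΓsRs z (M.A.adjoint v - z • (v : H)) := by
  rw [M.ΓsRs_spec z hz]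
  exact congrArg M.Γs (Subtype.ext (M.Rs_left z hz v).symm)

lemma eq_R_add_adjoint_ΓsRs {μ : ℂ} (hμ : μ.im < 0) (v : M.A.adjoint.domain) :
    (v : H) = M.R μ (M.A.adjoint v - μ • (v : H)) + I • ((M.ΓsRs (conj μ))†) (M.Γs v) := by
  have hμ' : 0 < (conj μ).im := by simpa using hμ
  refine ext_inner_right ℂ fun g => ?_
  set p : M.A.adjoint.domain := ⟨M.Rs (conj μ) g, M.Rs_mem _ hμ' g⟩
  have hg : M.A.adjoint p - conj μ • (p : H) = g := M.Rs_right _ hμ' g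
  have hΓ : M.ΓsRs (conj μ) g = M.Γs p := M.ΓsRs_spec _ hμ' g
  calc ⟪(v : H), g⟫ = ⟪(v : H), M.A.adjoint p⟫ - conj μ * ⟪(v : H), (p : H)⟫ := by
        rw [← hg, inner_sub_right, inner_smul_right]
    _ = ⟪M.A.adjoint v - μ • (v : H), (p : H)⟫ + -I * ⟪M.Γs v, M.Γs p⟫ := by
        rw [inner_sub_left, inner_smul_left]
        linear_combination M.lagrange_star p v
    _ = _ := by
        rw [inner_add_left, M.inner_R_apply hμ, inner_smul_left,
          ContinuousLinearMap.adjoint_inner_left, hΓ, conj_I]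

lemma eq_Rs_sub_adjoint_ΓR {w : ℂ} (hw : 0 < w.im) (u : M.A.domain) :
    (u : H) = M.Rs w (M.A u - w • (u : H)) - I • ((M.ΓR (conj w))†) (M.Γ u) := by
  have hw' : (conj w).im < 0 := by simpa using hw
  refine ext_inner_right ℂ fun g => ?_
  set q : M.A.domain := ⟨M.R (conj w) g, M.R_mem _ hw' g⟩
  have hg : M.A q - conj w • (q : H) = g := M.R_right _ hw' g
  have hΓ : M.ΓR (conj w) g = M.Γ q := M.ΓR_spec _ hw' g
  calc ⟪(u : H), g⟫ = ⟪(u : H), M.A q⟫ - conj w * ⟪(u : H), (q : H)⟫ := by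
        rw [← hg, inner_sub_right, inner_smul_right]
    _ = ⟪M.A u - w • (u : H), (q : H)⟫ + I * ⟪M.Γ u, M.Γ q⟫ := by
        rw [inner_sub_left, inner_smul_left]
        linear_combination M.lagrange q u
    _ = _ := by
        rw [inner_sub_left (M.Rs w _), M.inner_Rs_apply hw, inner_smul_left,
          ContinuousLinearMap.adjoint_inner_left, hΓ, conj_I]
        ring

lemma exists_mem_domain_of_Γs_eq_zero (v : M.A.adjoint.domain) (hv : M.Γs v = 0) :
    ∃ h : (v : H) ∈ M.A.domain, M.A ⟨v, h⟩ = M.A.adjoint v := by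
  have hv' := M.eq_R_add_adjoint_ΓsRs (μ := -I) (by simp) v
  rw [hv, map_zero, smul_zero, add_zero] at hv'
  obtain ⟨h, hA⟩ := M.exists_apply_eq_of_eq_R (by simp) hv'
  exact ⟨h, by rw [hA]; module⟩

lemma exists_mem_adjoint_domain_of_Γ_eq_zero (u : M.A.domain) (hu : M.Γ u = 0) :
    ∃ h : (u : H) ∈ M.A.adjoint.domain, M.A.adjoint ⟨u, h⟩ = M.A u ∧ M.Γs ⟨u, h⟩ = 0 := by
  have hform : ∀ x : M.A.domain, ⟪M.A u, (x : H)⟫ = ⟪(u : H), M.A x⟫ := fun x => by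
    have := M.lagrange x u
    rwa [hu, inner_zero_left, mul_zero, sub_eq_zero, eq_comm] at this
  have h := LinearPMap.mem_adjoint_domain_of_exists _ ⟨_, hform⟩
  have hA : M.A.adjoint ⟨u, h⟩ = M.A u := LinearPMap.adjoint_apply_eq M.dense_dom _ hform
  refine ⟨h, hA, (inner_self_eq_zero (𝕜 := ℂ)).1 ?_⟩
  have hs := M.lagrange_star ⟨u, h⟩ ⟨u, h⟩
  have hl := M.lagrange u u
  rw [hu, inner_zero_left, mul_zero] at hl
  rw [hA] at hs
  simpa [hl] using hs.symm

section cnsSubspace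

variable {l₁ l₂ : ℂ}

lemma isClosed_cnsSubspace : IsClosed (M.cnsSubspace l₁ l₂ : Set H) :=
  Submodule.isClosed_topologicalClosure _

lemma R_mem_cnsSubspace {μ : ℂ} (hμ : μ.im < 0) {x : H} (hx : x ∈ M.MSet l₁ l₂) :
    M.R μ x ∈ M.cnsSubspace l₁ l₂ :=
  Submodule.le_topologicalClosure _ (Submodule.subset_span (Or.inl ⟨μ, x, hμ, hx, rfl⟩))

lemma Rs_mem_cnsSubspace {w : ℂ} (hw : 0 < w.im) {x : H} (hx : x ∈ M.MSet l₁ l₂) :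
    M.Rs w x ∈ M.cnsSubspace l₁ l₂ :=
  Submodule.le_topologicalClosure _ (Submodule.subset_span (Or.inr ⟨w, x, hw, hx, rfl⟩))

lemma cnsSubspace_le {L : Submodule ℂ H} (hL : IsClosed (L : Set H))
    (hR : ∀ μ : ℂ, μ.im < 0 → ∀ x ∈ M.MSet l₁ l₂, M.R μ x ∈ L)
    (hRs : ∀ w : ℂ, 0 < w.im → ∀ x ∈ M.MSet l₁ l₂, M.Rs w x ∈ L) :
    M.cnsSubspace l₁ l₂ ≤ L := by
  refine Submodule.topologicalClosure_minimal _ (Submodule.span_le.2 ?_) hL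
  rintro _ (⟨μ, x, hμ, hx, rfl⟩ | ⟨w, x, hw, hx, rfl⟩)
  exacts [hR μ hμ x hx, hRs w hw x hx]

lemma MSet_subset_cnsSubspace : M.MSet l₁ l₂ ⊆ M.cnsSubspace l₁ l₂ := fun x hx =>
  (M.isClosed_cnsSubspace).mem_of_tendsto (M.tendsto_smul_R x) <| by
    filter_upwards [eventually_gt_atTop 0] with n hn
    exact Submodule.smul_mem _ _ (M.R_mem_cnsSubspace (by simpa using hn) hx)

lemma MSet_subset_orthogonal_iff {L : Submodule ℂ H} :
    M.MSet l₁ l₂ ⊆ Lᗮ ↔ ∀ f ∈ L, M.ΓR (-l₁) f = 0 ∧ M.ΓsRs l₂ f = 0 := by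
  simp only [MSet, Set.union_subset_iff, range_adjoint_subset_orthogonal_iff, forall₂_and]

end cnsSubspace

lemma mapsTo_R_cnsSubspace :
    Set.MapsTo (M.R (-I)) (M.cnsSubspace I I) (M.cnsSubspace I I) := by
  have hI : (-I).im < 0 := by simp
  set K := M.cnsSubspace I I
  intro f hf
  refine M.cnsSubspace_le (L := K.comap (M.R (-I) : H →ₗ[ℂ] H))
    (M.isClosed_cnsSubspace.preimage (M.R (-I)).continuous) (fun μ hμ x hx => ?_)
    (fun w hw x hx => ?_) hf
  · exact M.isDissipativeResolvent_R.apply_apply_mem M.isClosed_cnsSubspace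
      (fun μ hμ => M.R_mem_cnsSubspace hμ hx) hI hμ
  · -- the defect formula at `v = (A* - w)⁻¹ x`, where `(A* + i) v = x + (w + i) v`
    have hv := M.eq_R_add_adjoint_ΓsRs hI ⟨M.Rs w x, M.Rs_mem w hw x⟩
    have harg : M.A.adjoint ⟨M.Rs w x, M.Rs_mem w hw x⟩ - (-I) • M.Rs w x
        = x + (w + I) • M.Rs w x := by
      linear_combination (norm := module) M.Rs_right w hw x
    rw [harg, map_add, map_smul, map_neg, conj_I, neg_neg] at hv
    have hwI : w + I ≠ 0 := fun h => by
      have := congrArg im h; simp at this; linarith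
    show M.R (-I) (M.Rs w x) ∈ K
    rw [← K.smul_mem_iff hwI, show (w + I) • M.R (-I) (M.Rs w x) = M.Rs w x - M.R (-I) x
      - I • ((M.ΓsRs I)†) (M.Γs ⟨M.Rs w x, M.Rs_mem w hw x⟩) by
        linear_combination (norm := module) -hv]
    exact K.sub_mem (K.sub_mem (M.Rs_mem_cnsSubspace hw hx) (M.R_mem_cnsSubspace hI hx))
      (K.smul_mem _ (M.MSet_subset_cnsSubspace (Or.inr ⟨_, rfl⟩)))

lemma mapsTo_Rs_cnsSubspace :
    Set.MapsTo (M.Rs I) (M.cnsSubspace I I) (M.cnsSubspace I I) := by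
  have hI : 0 < I.im := by simp
  set K := M.cnsSubspace I I
  intro f hf
  refine M.cnsSubspace_le (L := K.comap (M.Rs I : H →ₗ[ℂ] H))
    (M.isClosed_cnsSubspace.preimage (M.Rs I).continuous) (fun μ hμ x hx => ?_)
    (fun w hw x hx => ?_) hf
  · -- the defect formula at `u = (A - μ)⁻¹ x`, where `(A - i) u = x + (μ - i) u`
    have hu := M.eq_Rs_sub_adjoint_ΓR hI ⟨M.R μ x, M.R_mem μ hμ x⟩
    have harg : M.A ⟨M.R μ x, M.R_mem μ hμ x⟩ - I • M.R μ x = x + (μ - I) • M.R μ x := by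
      linear_combination (norm := module) M.R_right μ hμ x
    rw [harg, map_add, map_smul, conj_I] at hu
    have hμI : μ - I ≠ 0 := fun h => by
      have := congrArg im h; simp at this; linarith
    show M.Rs I (M.R μ x) ∈ K
    rw [← K.smul_mem_iff hμI, show (μ - I) • M.Rs I (M.R μ x) = M.R μ x - M.Rs I x
      + I • ((M.ΓR (-I))†) (M.Γ ⟨M.R μ x, M.R_mem μ hμ x⟩) by
        linear_combination (norm := module) -hu]
    exact K.add_mem (K.sub_mem (M.R_mem_cnsSubspace hμ hx) (M.Rs_mem_cnsSubspace hI hx))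
      (K.smul_mem _ (M.MSet_subset_cnsSubspace (Or.inl ⟨_, rfl⟩)))
  · exact M.Rs_apply_Rs_mem M.isClosed_cnsSubspace (fun w hw => M.Rs_mem_cnsSubspace hw hx) hI hw

lemma isSelfAdjointOn_of_mapsTo {L : Submodule ℂ H} (hL : IsClosed (L : Set H))
    (hR : Set.MapsTo (M.R (-I)) L L) (hRs : Set.MapsTo (M.Rs I) L L)
    (hΓ : ∀ f ∈ L, M.ΓR (-I) f = 0 ∧ M.ΓsRs I f = 0) : IsSelfAdjointOn M.A L := by
  have hI : 0 < I.im := by simp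
  have hinv := M.pmapInvariant_of_mapsTo hL hR hRs
  have hΓL {u : M.A.domain} (hu : (u : H) ∈ L) : M.Γ u = 0 := by
    rw [M.Γ_eq_ΓR (z := -I) (by simp) u]
    exact (hΓ _ (L.sub_mem (hinv.apply_mem hu) (L.smul_mem _ hu))).1
  refine ⟨hinv.subset_closure_inter_domain M.dense_dom, fun u hu => hinv.apply_mem hu,
    fun u v _ hv => ?_, fun f hf => ?_, fun f hf => ?_⟩
  · have := M.lagrange u v
    rwa [hΓL hv, inner_zero_left, mul_zero, sub_eq_zero] at this
  · obtain ⟨hdom, hA⟩ := M.exists_mem_domain_of_Γs_eq_zero ⟨M.Rs I f, M.Rs_mem I hI f⟩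
      (by rw [← M.ΓsRs_spec I hI f]; exact (hΓ f hf).2)
    exact ⟨⟨_, hdom⟩, hRs hf, by rw [hA]; exact M.Rs_right I hI f⟩
  · exact ⟨⟨_, M.R_mem (-I) (by simp) f⟩, hR hf, by
      linear_combination (norm := module) M.R_right (-I) (by simp) f⟩

variable {M}

lemma Γ_eq_zero_of_isSelfAdjointOn {W : Submodule ℂ H} (hW : IsSelfAdjointOn M.A W)
    {u : M.A.domain} (hu : (u : H) ∈ W) : M.Γ u = 0 := by
  have h := M.lagrange u u
  rw [hW.2.2.1 u u hu hu, sub_self, eq_comm, mul_eq_zero] at h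
  exact inner_self_eq_zero.1 (h.resolve_left I_ne_zero)

lemma R_mem_and_ΓR_eq_zero_of_isSelfAdjointOn {W : Submodule ℂ H}
    (hW : IsSelfAdjointOn M.A W) {f : H} (hf : f ∈ W) :
    M.R (-I) f ∈ W ∧ M.ΓR (-I) f = 0 := by
  obtain ⟨u, hu, rfl⟩ := hW.2.2.2.2 f hf
  have harg : M.A u + I • (u : H) = M.A u - (-I) • (u : H) := by module
  rw [harg, M.R_left _ (by simp), ← M.Γ_eq_ΓR (by simp)]
  exact ⟨hu, Γ_eq_zero_of_isSelfAdjointOn hW hu⟩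

lemma Rs_mem_and_ΓsRs_eq_zero_of_isSelfAdjointOn {W : Submodule ℂ H}
    (hW : IsSelfAdjointOn M.A W) {f : H} (hf : f ∈ W) :
    M.Rs I f ∈ W ∧ M.ΓsRs I f = 0 := by
  obtain ⟨u, hu, rfl⟩ := hW.2.2.2.1 f hf
  obtain ⟨hu', hA, hΓs⟩ :=
    M.exists_mem_adjoint_domain_of_Γ_eq_zero u (Γ_eq_zero_of_isSelfAdjointOn hW hu)
  rw [← hA, M.Rs_left _ (by simp), ← M.Γs_eq_ΓsRs (by simp)]
  exact ⟨hu, hΓs⟩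

variable (M)

lemma eq_bot_of_isSelfAdjointOn {W : Submodule ℂ H} (hWc : IsClosed (W : Set H))
    (hWK : W ≤ M.cnsSubspace I I) (hW : IsSelfAdjointOn M.A W) : W = ⊥ := by
  have hR {μ : ℂ} (hμ : μ.im < 0) : Set.MapsTo (M.R μ) W W :=
    M.isDissipativeResolvent_R.mapsTo hWc (z₀ := -I) (by simp)
      (fun _ hf => (R_mem_and_ΓR_eq_zero_of_isSelfAdjointOn hW hf).1) hμ
  have hRs {w : ℂ} (hw : 0 < w.im) : Set.MapsTo (M.Rs w) W W :=
    M.mapsTo_Rs hWc (z₀ := I) (by simp)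
      (fun _ hf => (Rs_mem_and_ΓsRs_eq_zero_of_isSelfAdjointOn hW hf).1) hw
  have hMW : M.MSet I I ⊆ Wᗮ := M.MSet_subset_orthogonal_iff.2 fun _ hf =>
    ⟨(R_mem_and_ΓR_eq_zero_of_isSelfAdjointOn hW hf).2,
      (Rs_mem_and_ΓsRs_eq_zero_of_isSelfAdjointOn hW hf).2⟩
  have hKW : M.cnsSubspace I I ≤ Wᗮ := M.cnsSubspace_le (Submodule.isClosed_orthogonal W)
    (fun μ hμ _ hx => mapsTo_orthogonal_of_mapsTo_adjoint
      (by rw [M.adjoint_R hμ]; exact hRs (by simpa using hμ)) (hMW hx))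
    (fun w hw _ hx => mapsTo_orthogonal_of_mapsTo_adjoint
      (by rw [M.adjoint_Rs hw]; exact hR (by simpa using hw)) (hMW hx))
  exact W.orthogonal_disjoint.eq_bot_of_le (hWK.trans hKW)

end StrausSetting

/-- With `H_cns = cnsSubspace` (formed with `λ' = λ'' = i`) and
`H_sa = H_cnsᗮ`: (i) `H_cns` is reducing for `A` (both `H_cns` and `H_sa` are invariant);
(ii) the restriction of `A` to `H_sa` is selfadjoint in `H_sa`; (iii) the restriction of
`A` to `H_cns` is completely non-selfadjoint: there is no nonzero closed subspace
`W ⊆ H_cns`, reducing for the restriction `A_cns`, on which the restriction of `A` is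
selfadjoint. -/
theorem stmt18 (M : StrausSetting H E Es) :
    PMapInvariant M.A (M.cnsSubspace Complex.I Complex.I) ∧
    PMapInvariant M.A (M.cnsSubspace Complex.I Complex.I)ᗮ ∧
    IsSelfAdjointOn M.A (M.cnsSubspace Complex.I Complex.I)ᗮ ∧
    ¬ ∃ W : Submodule ℂ H, IsClosed (W : Set H) ∧ W ≠ ⊥ ∧
        W ≤ M.cnsSubspace Complex.I Complex.I ∧
        RelInvariant M.A (M.cnsSubspace Complex.I Complex.I) W ∧
        RelInvariant M.A (M.cnsSubspace Complex.I Complex.I)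
          ((M.cnsSubspace Complex.I Complex.I) ⊓ Wᗮ) ∧
        IsSelfAdjointOn M.A W := by
  have hK := M.isClosed_cnsSubspace (l₁ := I) (l₂ := I)
  have hR_orth : Set.MapsTo (M.R (-I)) (M.cnsSubspace I I)ᗮ (M.cnsSubspace I I)ᗮ :=
    mapsTo_orthogonal_of_mapsTo_adjoint (by rw [M.adjoint_R_neg_I]; exact M.mapsTo_Rs_cnsSubspace)
  have hRs_orth : Set.MapsTo (M.Rs I) (M.cnsSubspace I I)ᗮ (M.cnsSubspace I I)ᗮ :=
    mapsTo_orthogonal_of_mapsTo_adjoint (by rw [M.adjoint_Rs_I]; exact M.mapsTo_R_cnsSubspace)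
  refine ⟨M.pmapInvariant_of_mapsTo hK M.mapsTo_R_cnsSubspace M.mapsTo_Rs_cnsSubspace,
    M.pmapInvariant_of_mapsTo (Submodule.isClosed_orthogonal _) hR_orth hRs_orth,
    M.isSelfAdjointOn_of_mapsTo (Submodule.isClosed_orthogonal _) hR_orth hRs_orth ?_, ?_⟩
  · rw [← M.MSet_subset_orthogonal_iff, orthogonal_orthogonal_of_isClosed hK]
    exact M.MSet_subset_cnsSubspace
  · rintro ⟨W, hWc, hW0, hWK, -, -, hW⟩
    exact hW0 (M.eq_bot_of_isSelfAdjointOn hWc hWK hW)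

end
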